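/- Let p be a prime, let F₁ = B(a₁, γ) \ U₁ and F₂ = B(a₂, γ') \ U₂ be two 'swiss cheeses' in ℤ, i.e., set differences of a ball and a finite union of balls, with outer-ball radii γ ≤ γ'. If F₁ ∩ F₂ ≠ ∅, then B(a₂, γ') ⊆ B(a₁, γ), and F₁ ∪ F₂ can be written as B(a₁, γ) minus a finite union of balls, each of which is contained in one of the holes of F₁ or F₂ (in fact each is an intersection of a hole of F₁ with a hole of F₂ or a hole of F₁ disjoint from B(a₂,γ')). -/

import Mathlib

def ball (p : ℕ) (a : ℤ) (γ : ℕ) : Set ℤ := {x : ℤ | (p : ℤ) ^ γ ∣ (x - a)}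

/-!
Of two intersecting balls, the one of larger radius exponent lies in the other, so
`F₂ ⊆ B(a₂, γ') ⊆ B(a₁, γ)` and `F₁ ∪ F₂ = B(a₁, γ) \ ⋃ᵢ (Bᵢ \ F₂)` over the holes `Bᵢ` of `F₁`.
Each `Bᵢ \ F₂ = (Bᵢ \ B(a₂, γ')) ∪ ⋃ⱼ (Bᵢ ∩ B'ⱼ)` is a finite union of balls inside `Bᵢ`:
an intersection of two balls is empty or one of them, and `Bᵢ \ B(a₂, γ')` is the union of
those balls of radius exponent `max (δᵢ, γ')` inside `Bᵢ` that miss `B(a₂, γ')`.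
-/

namespace ball

variable {p : ℕ} {a b x : ℤ} {γ δ m : ℕ}

lemma mem_iff : x ∈ ball p a γ ↔ (p : ℤ) ^ γ ∣ x - a := Iff.rfl

lemma subset_of_mem (h : γ ≤ δ) (hb : b ∈ ball p a γ) : ball p b δ ⊆ ball p a γ := by
  intro y hy
  rw [mem_iff, show y - a = (y - b) + (b - a) by ring]
  exact dvd_add ((pow_dvd_pow _ h).trans hy) hb

lemma subset_of_mem_of_mem (h : γ ≤ δ) (hxa : x ∈ ball p a γ) (hxb : x ∈ ball p b δ) :
    ball p b δ ⊆ ball p a γ := by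
  refine subset_of_mem h ?_
  rw [mem_iff, show b - a = (x - a) - (x - b) by ring]
  exact dvd_sub hxa ((pow_dvd_pow _ h).trans hxb)

lemma subset_or_disjoint (h : γ ≤ δ) :
    ball p b δ ⊆ ball p a γ ∨ Disjoint (ball p b δ) (ball p a γ) := by
  refine or_iff_not_imp_right.mpr fun hd => ?_
  obtain ⟨x, hxb, hxa⟩ := Set.not_disjoint_iff.mp hd
  exact subset_of_mem_of_mem h hxa hxb

lemma eq_biUnion (hp : 0 < p) (h : γ ≤ m) :
    ball p a γ = ⋃ c ∈ ball p a γ ∩ Set.Ico 0 ((p : ℤ) ^ m), ball p c m := by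
  ext y
  simp only [Set.mem_iUnion, Set.mem_inter_iff, exists_prop]
  constructor
  · intro hy
    have hpm : (0 : ℤ) < (p : ℤ) ^ m := by positivity
    have hyc : y ∈ ball p (y % (p : ℤ) ^ m) m := Int.dvd_self_sub_of_emod_eq rfl
    refine ⟨y % (p : ℤ) ^ m, ⟨?_, Int.emod_nonneg _ hpm.ne', Int.emod_lt_of_pos _ hpm⟩, hyc⟩
    rw [mem_iff, show y % (p : ℤ) ^ m - a = (y - a) - (y - y % (p : ℤ) ^ m) by ring]
    exact dvd_sub hy ((pow_dvd_pow _ h).trans hyc)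
  · rintro ⟨c, ⟨hc, -⟩, hyc⟩
    exact subset_of_mem h hc hyc

end ball

def IsBallUnion (p : ℕ) (P : Set (ℤ × ℕ)) (T : Set ℤ) : Prop :=
  ∃ S ⊆ P, S.Finite ∧ T = ⋃ q ∈ S, ball p q.1 q.2

namespace IsBallUnion

variable {p : ℕ} {P P' : Set (ℤ × ℕ)} {T T' : Set ℤ}

lemma empty : IsBallUnion p P ∅ :=
  ⟨∅, Set.empty_subset _, Set.finite_empty, by simp⟩

lemma single {a : ℤ} {γ : ℕ} (h : (a, γ) ∈ P) : IsBallUnion p P (ball p a γ) :=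
  ⟨{(a, γ)}, Set.singleton_subset_iff.mpr h, Set.finite_singleton _, by simp⟩

lemma mono (hT : IsBallUnion p P T) (hP : P ⊆ P') : IsBallUnion p P' T :=
  let ⟨S, hS, hfin, hT⟩ := hT
  ⟨S, hS.trans hP, hfin, hT⟩

lemma union (hT : IsBallUnion p P T) (hT' : IsBallUnion p P T') : IsBallUnion p P (T ∪ T') := by
  obtain ⟨S, hS, hfin, rfl⟩ := hT
  obtain ⟨S', hS', hfin', rfl⟩ := hT'
  exact ⟨S ∪ S', Set.union_subset hS hS', hfin.union hfin', (Set.biUnion_union S S' _).symm⟩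

lemma iUnion {ι : Type*} [Finite ι] {T : ι → Set ℤ} (hT : ∀ i, IsBallUnion p P (T i)) :
    IsBallUnion p P (⋃ i, T i) := by
  choose S hS hfin hT using hT
  refine ⟨⋃ i, S i, Set.iUnion_subset hS, Set.finite_iUnion hfin, ?_⟩
  rw [Set.biUnion_iUnion]
  exact Set.iUnion_congr hT

lemma biUnion {ι : Type*} {s : Set ι} (hs : s.Finite) {T : ι → Set ℤ}
    (hT : ∀ i ∈ s, IsBallUnion p P (T i)) : IsBallUnion p P (⋃ i ∈ s, T i) := by
  have := hs.to_subtype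
  rw [Set.biUnion_eq_iUnion]
  exact iUnion fun i => hT i i.2

lemma exists_fin (hT : IsBallUnion p P T) :
    ∃ (n : ℕ) (c : Fin n → ℤ) (ε : Fin n → ℕ),
      T = ⋃ j, ball p (c j) (ε j) ∧ ∀ j, (c j, ε j) ∈ P := by
  obtain ⟨S, hS, hfin, rfl⟩ := hT
  have := hfin.to_subtype
  obtain ⟨n, ⟨e⟩⟩ := Finite.exists_equiv_fin S
  refine ⟨n, fun j => (e.symm j).1.1, fun j => (e.symm j).1.2, ?_, fun j => hS (e.symm j).2⟩
  rw [Set.biUnion_eq_iUnion]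
  exact (e.symm.iSup_comp (g := fun q : S => ball p q.1.1 q.1.2)).symm

end IsBallUnion

section Holes

variable {p : ℕ} {a b : ℤ} {γ δ : ℕ}

lemma isBallUnion_ball_inter_ball :
    IsBallUnion p {q | ball p q.1 q.2 ⊆ ball p a γ} (ball p a γ ∩ ball p b δ) := by
  rcases le_total γ δ with h | h
  · rcases ball.subset_or_disjoint (p := p) (a := a) (b := b) h with hs | hd
    · rw [Set.inter_eq_right.mpr hs]
      exact IsBallUnion.single hs
    · rw [hd.symm.inter_eq]
      exact IsBallUnion.empty
  · rcases ball.subset_or_disjoint (p := p) (a := b) (b := a) h with hs | hd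
    · rw [Set.inter_eq_left.mpr hs]
      exact IsBallUnion.single (Set.Subset.refl _)
    · rw [hd.inter_eq]
      exact IsBallUnion.empty

lemma isBallUnion_ball_diff_ball (hp : 0 < p) :
    IsBallUnion p {q | ball p q.1 q.2 ⊆ ball p a γ} (ball p a γ \ ball p b δ) := by
  have hsplit : ball p a γ \ ball p b δ =
      ⋃ c ∈ ball p a γ ∩ Set.Ico 0 ((p : ℤ) ^ max γ δ), (ball p c (max γ δ) \ ball p b δ) := by
    conv_lhs => rw [ball.eq_biUnion hp (le_max_left γ δ)]
    simp only [Set.iUnion_sdiff]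
  rw [hsplit]
  refine IsBallUnion.biUnion ((Set.finite_Ico _ _).inter_of_right _) fun c ⟨hc, _⟩ => ?_
  have hca : ball p c (max γ δ) ⊆ ball p a γ := ball.subset_of_mem (le_max_left γ δ) hc
  rcases ball.subset_or_disjoint (p := p) (a := b) (b := c) (le_max_right γ δ) with hs | hd
  · rw [Set.sdiff_eq_empty.mpr hs]
    exact IsBallUnion.empty
  · rw [hd.sdiff_eq_left]
    exact IsBallUnion.single hca

lemma isBallUnion_ball_diff_cheese (hp : 0 < p) {ι : Type*} [Finite ι] (a' : ℤ) (γ' : ℕ)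
    (b : ι → ℤ) (δ : ι → ℕ) :
    IsBallUnion p {q | ball p q.1 q.2 ⊆ ball p a γ}
      (ball p a γ \ (ball p a' γ' \ ⋃ i, ball p (b i) (δ i))) := by
  rw [Set.sdiff_sdiff_right, Set.inter_iUnion]
  exact (isBallUnion_ball_diff_ball hp).union
    (IsBallUnion.iUnion fun _ => isBallUnion_ball_inter_ball)

end Holes

/-- If two swiss cheeses F₁ = B(a₁,γ) \ ⋃ holes and F₂ = B(a₂,γ') \ ⋃ holes,
with γ ≤ γ', intersect, then B(a₂,γ') ⊆ B(a₁,γ) and F₁ ∪ F₂ is again a swiss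
cheese with outer ball B(a₁,γ), whose holes are each contained in a hole of
F₁ or of F₂. -/
theorem union_of_cheeses (p : ℕ) (hp : p.Prime)
    (a₁ a₂ : ℤ) (γ γ' : ℕ) (hγ : γ ≤ γ')
    (n₁ n₂ : ℕ) (b₁ : Fin n₁ → ℤ) (δ₁ : Fin n₁ → ℕ)
    (b₂ : Fin n₂ → ℤ) (δ₂ : Fin n₂ → ℕ)
    (hne : ((ball p a₁ γ \ ⋃ i, ball p (b₁ i) (δ₁ i)) ∩
            (ball p a₂ γ' \ ⋃ i, ball p (b₂ i) (δ₂ i))).Nonempty) :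
    ball p a₂ γ' ⊆ ball p a₁ γ ∧
    ∃ (n : ℕ) (c : Fin n → ℤ) (ε : Fin n → ℕ),
      (ball p a₁ γ \ ⋃ i, ball p (b₁ i) (δ₁ i)) ∪
        (ball p a₂ γ' \ ⋃ i, ball p (b₂ i) (δ₂ i))
        = ball p a₁ γ \ ⋃ j, ball p (c j) (ε j) ∧
      ∀ j, (∃ i, ball p (c j) (ε j) ⊆ ball p (b₁ i) (δ₁ i)) ∨
           (∃ i, ball p (c j) (ε j) ⊆ ball p (b₂ i) (δ₂ i)) := by
  obtain ⟨x, ⟨hx₁, -⟩, hx₂, -⟩ := hne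
  have hsub : ball p a₂ γ' ⊆ ball p a₁ γ := ball.subset_of_mem_of_mem hγ hx₁ hx₂
  refine ⟨hsub, ?_⟩
  set F₂ := ball p a₂ γ' \ ⋃ i, ball p (b₂ i) (δ₂ i)
  have holes : IsBallUnion p {q | ∃ i, ball p q.1 q.2 ⊆ ball p (b₁ i) (δ₁ i)}
      (⋃ i, ball p (b₁ i) (δ₁ i) \ F₂) :=
    IsBallUnion.iUnion fun i =>
      (isBallUnion_ball_diff_cheese hp.pos a₂ γ' b₂ δ₂).mono fun _ hq => ⟨i, hq⟩
  obtain ⟨n, c, ε, hU, hc⟩ := holes.exists_fin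
  refine ⟨n, c, ε, ?_, fun j => Or.inl (hc j)⟩
  rw [← hU, ← Set.iUnion_sdiff, Set.sdiff_sdiff_right,
    Set.inter_eq_right.mpr (Set.sdiff_subset.trans hsub)]
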